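/- For every integer n ≥ 2, 1 + Σ_{i=2}^{n} (1 + F_i F_{i−1})^2 = 2 F_n^2 + (−1)^n − 1 + (24/25) n + (1/25) F_{4n} + (2/25)(−1)^n F_n L_n, as an identity of rational numbers. -/
import Mathlib


/-- The Lucas numbers: L₀ = 2, L₁ = 1, Lₖ = Lₖ₋₁ + Lₖ₋₂. -/
def lucas : ℕ → ℕ
  | 0 => 2
  | 1 => 1
  | n + 2 => lucas (n + 1) + lucas n

lemma lucas_cast (n : ℕ) : (lucas n : ℚ) = 2 * Nat.fib (n + 1) - Nat.fib n := by
  induction n using Nat.twoStepInduction with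
  | zero => simp [lucas]
  | one => norm_num [lucas]
  | more n ih1 ih2 =>
    have h1 := Nat.fib_add_two (n := n)
    have h2 := Nat.fib_add_two (n := n + 1)
    show ((lucas (n+1) + lucas n : ℕ) : ℚ) = _
    push_cast [ih1, ih2, h1, h2]
    ring

lemma cassini (n : ℕ) : (Nat.fib (n+1) : ℚ) ^ 2 - Nat.fib (n+1) * Nat.fib n
    - (Nat.fib n : ℚ) ^ 2 = (-1) ^ n := by
  induction n with
  | zero => simp
  | succ n ih =>
    rw [Nat.fib_add_two]
    push_cast
    have : ((-1 : ℚ)) ^ (n + 1) = -(-1 : ℚ) ^ n := by ring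
    rw [this]
    linear_combination -ih

lemma fib_two_mul_cast (n : ℕ) : (Nat.fib (2 * n) : ℚ)
    = 2 * Nat.fib n * Nat.fib (n + 1) - (Nat.fib n : ℚ) ^ 2 := by
  have h := Nat.fib_two_mul n
  have hle : Nat.fib n ≤ 2 * Nat.fib (n + 1) :=
    le_trans (Nat.fib_le_fib_succ) (by omega)
  rw [h]
  rw [Nat.cast_mul, Nat.cast_sub hle]
  push_cast
  ring

lemma fib_four_mul_cast (n : ℕ) : (Nat.fib (4 * n) : ℚ)
    = 2 * (2 * Nat.fib n * Nat.fib (n + 1) - (Nat.fib n : ℚ) ^ 2)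
        * ((Nat.fib (n+1) : ℚ) ^ 2 + (Nat.fib n : ℚ) ^ 2)
      - (2 * Nat.fib n * Nat.fib (n + 1) - (Nat.fib n : ℚ) ^ 2) ^ 2 := by
  have h4 : 4 * n = 2 * (2 * n) := by ring
  rw [h4, fib_two_mul_cast (2 * n), fib_two_mul_cast n, Nat.fib_two_mul_add_one]
  push_cast
  ring

theorem diag_sum_formula (n : ℕ) (hn : 2 ≤ n) :
    1 + ∑ i ∈ Finset.Icc 2 n, (1 + (Nat.fib i : ℚ) * Nat.fib (i - 1)) ^ 2
      = 2 * (Nat.fib n : ℚ) ^ 2 + (-1 : ℚ) ^ n - 1 + (24 / 25) * n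
        + (1 / 25) * Nat.fib (4 * n) + (2 / 25) * (-1 : ℚ) ^ n * Nat.fib n * lucas n := by
  induction n, hn using Nat.le_induction with
  | base =>
    norm_num [Finset.Icc_self, lucas, Nat.fib]
  | succ n hn ih =>
    rw [Finset.sum_Icc_succ_top (by omega : 2 ≤ n + 1)]
    have hsub : n + 1 - 1 = n := by omega
    rw [hsub]
    have hC := cassini n
    have he : ((-1 : ℚ) ^ n) ^ 2 = 1 := by
      rw [← pow_mul, mul_comm, pow_mul]; norm_num
    have hfib2 : (Nat.fib (n + 2) : ℚ) = Nat.fib n + Nat.fib (n + 1) := by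
      rw [Nat.fib_add_two]; push_cast; ring
    have hneg : ((-1 : ℚ)) ^ (n + 1) = -(-1 : ℚ) ^ n := by ring
    rw [fib_four_mul_cast (n + 1), fib_four_mul_cast n, lucas_cast (n + 1), lucas_cast n,
      hfib2, hneg] at *
    push_cast
    set a : ℚ := (Nat.fib n : ℚ)
    set b : ℚ := (Nat.fib (n + 1) : ℚ)
    linear_combination ih - ((3 * b^2 + 7 * a * b - 3 * a^2 + (-1:ℚ)^n + 50) / 25) * hC
      - (1/25) * he
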